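/- For every smooth compactly supported function φ : ℝ^d → ℂ and every x ∈ ℝ^d, the integral ∫_{ℝ^d} H(x,ξ,t) φ(ξ) dξ tends to φ(x) as t → 0⁺ (limit along positive t tending to 0). -/

import Mathlib

open MeasureTheory

/-- Rotation `e^{tS}x` given by the matrix exponential. -/
noncomputable def ouRot (d : ℕ) (S : Matrix (Fin d) (Fin d) ℝ) (t : ℝ)
    (x : EuclideanSpace ℝ (Fin d)) : EuclideanSpace ℝ (Fin d) :=
  WithLp.toLp 2 (Matrix.mulVec (NormedSpace.exp (t • S)) x.ofLp)

/-- The scalar complex Ornstein--Uhlenbeck kernel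
`H(x,ξ,t) = (4παt)^{-d/2} exp(-δt - |e^{tS}x - ξ|²/(4αt))`. -/
noncomputable def ouH (d : ℕ) (α δ : ℂ) (S : Matrix (Fin d) (Fin d) ℝ)
    (x ξ : EuclideanSpace ℝ (Fin d)) (t : ℝ) : ℂ :=
  (4 * (Real.pi : ℂ) * α * t) ^ (-(d : ℂ) / 2) *
    Complex.exp (-(δ * t) - ((‖ouRot d S t x - ξ‖ ^ 2 : ℝ) : ℂ) / (4 * α * t))

lemma ouAux_mul_cpow (z : ℂ) (hz : z ≠ 0) {t : ℝ} (ht : 0 < t) (w : ℂ) :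
    (z * (t : ℂ)) ^ w = z ^ w * (t : ℂ) ^ w := by
  have htne : (t : ℂ) ≠ 0 := by exact_mod_cast ht.ne'
  rw [Complex.cpow_def_of_ne_zero (mul_ne_zero hz htne),
    Complex.cpow_def_of_ne_zero hz, Complex.cpow_def_of_ne_zero htne,
    Complex.log_mul_ofReal t ht z hz, ← Complex.exp_add,
    ← Complex.ofReal_log ht.le]
  congr 1
  ring

lemma ouRot_tendsto (d : ℕ) (S : Matrix (Fin d) (Fin d) ℝ) (x : EuclideanSpace ℝ (Fin d)) :
    Filter.Tendsto (fun t : ℝ => ouRot d S t x) (nhds 0) (nhds x) := by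
  have hexp : Continuous fun t : ℝ => NormedSpace.exp (t • S) := by
    letI : SeminormedRing (Matrix (Fin d) (Fin d) ℝ) := Matrix.linftyOpSemiNormedRing
    letI : NormedRing (Matrix (Fin d) (Fin d) ℝ) := Matrix.linftyOpNormedRing
    letI : NormedAlgebra ℝ (Matrix (Fin d) (Fin d) ℝ) := Matrix.linftyOpNormedAlgebra
    exact (continuous_iff_continuousAt.2 fun y =>
      (NormedSpace.exp_analytic (𝕂 := ℝ) y).continuousAt).comp
      (continuous_id.smul continuous_const)
  have hcont : Continuous fun t : ℝ => ouRot d S t x := by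
    unfold ouRot
    refine (PiLp.continuous_toLp 2 _).comp
      (f := fun t : ℝ => Matrix.mulVec (NormedSpace.exp (t • S)) x.ofLp) ?_
    apply continuous_pi
    intro i
    unfold Matrix.mulVec dotProduct
    exact continuous_finset_sum _ fun j _ =>
      (((continuous_apply j).comp ((continuous_apply i).comp hexp)).mul continuous_const)
  have := hcont.tendsto 0
  convert this using 2
  unfold ouRot
  rw [zero_smul, NormedSpace.exp_zero, Matrix.one_mulVec]

lemma ouH_integral_eq (d : ℕ) (α δ : ℂ) (hα : 0 < α.re)
    (S : Matrix (Fin d) (Fin d) ℝ) (φ : EuclideanSpace ℝ (Fin d) → ℂ)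
    (x : EuclideanSpace ℝ (Fin d)) {t : ℝ} (ht : 0 < t) :
    ∫ ξ : EuclideanSpace ℝ (Fin d), ouH d α δ S x ξ t * φ ξ
      = Complex.exp (-(δ * t)) * (4 * (Real.pi : ℂ) * α) ^ (-(d : ℂ) / 2) *
        ∫ v : EuclideanSpace ℝ (Fin d),
          Complex.exp (-(4 * α)⁻¹ * (‖v‖ : ℂ) ^ 2) * φ (ouRot d S t x - Real.sqrt t • v) := by
  have hαne : α ≠ 0 := fun h => by simp [h] at hα
  have h4πα : (4 * (Real.pi : ℂ) * α) ≠ 0 :=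
    mul_ne_zero (mul_ne_zero (by norm_num) (by exact_mod_cast Real.pi_ne_zero)) hαne
  have htne : (t : ℂ) ≠ 0 := by exact_mod_cast ht.ne'
  set y := ouRot d S t x with hy
  set F : EuclideanSpace ℝ (Fin d) → ℂ := fun ξ => ouH d α δ S x ξ t * φ ξ with hF
  rw [← MeasureTheory.integral_sub_left_eq_self F volume y]
  have hs := MeasureTheory.Measure.integral_comp_smul_of_nonneg
      (volume : Measure (EuclideanSpace ℝ (Fin d)))
      (fun ξ => F (y - ξ)) (Real.sqrt t) (hR := Real.sqrt_nonneg t)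
  simp only [finrank_euclideanSpace_fin] at hs
  have hc : (Real.sqrt t) ^ d ≠ 0 := pow_ne_zero _ (Real.sqrt_pos.mpr ht).ne'
  have step : ∫ ξ, F (y - ξ) = (Real.sqrt t ^ d : ℝ) • ∫ v, F (y - Real.sqrt t • v) := by
    rw [hs, smul_inv_smul₀ hc]
  rw [step, ← MeasureTheory.integral_smul, mul_assoc, ← MeasureTheory.integral_const_mul,
    ← MeasureTheory.integral_const_mul]
  congr 1
  funext v
  have hnorm : ‖y - (y - Real.sqrt t • v)‖ ^ 2 = t * ‖v‖ ^ 2 := by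
    rw [sub_sub_cancel, norm_smul, Real.norm_eq_abs, _root_.abs_of_nonneg (Real.sqrt_nonneg t),
      mul_pow, Real.sq_sqrt ht.le]
  have E1 : (4 * (Real.pi : ℂ) * α * t) ^ (-(d : ℂ) / 2)
      = (4 * (Real.pi : ℂ) * α) ^ (-(d : ℂ) / 2) * (t : ℂ) ^ (-(d : ℂ) / 2) :=
    ouAux_mul_cpow _ h4πα ht _
  have E2 : ((Real.sqrt t ^ d : ℝ) : ℂ) = (t : ℂ) ^ ((d : ℂ) / 2) := by
    have h1 : Real.sqrt t ^ d = t ^ ((d : ℝ) / 2) := by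
      rw [Real.sqrt_eq_rpow, ← Real.rpow_natCast (t ^ (1 / 2 : ℝ)) d, ← Real.rpow_mul ht.le]
      congr 1
      ring
    rw [h1, Complex.ofReal_cpow ht.le]
    norm_num
  have E3 : (t : ℂ) ^ ((d : ℂ) / 2) * (t : ℂ) ^ (-(d : ℂ) / 2) = 1 := by
    rw [← Complex.cpow_add _ _ htne, neg_div, add_neg_cancel, Complex.cpow_zero]
  have E4 : Complex.exp (-(δ * t) - ((t * ‖v‖ ^ 2 : ℝ) : ℂ) / (4 * α * t))
      = Complex.exp (-(δ * t)) * Complex.exp (-(4 * α)⁻¹ * (‖v‖ : ℂ) ^ 2) := by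
    rw [← Complex.exp_add]
    congr 1
    push_cast
    field_simp
    ring
  rw [hF]
  simp only [ouH, ← hy, hnorm, E1, E2, E4, Complex.real_smul, E2]
  linear_combination ((4 * (Real.pi : ℂ) * α) ^ (-(d : ℂ) / 2) * Complex.exp (-(δ * t))
    * Complex.exp (-(4 * α)⁻¹ * (‖v‖ : ℂ) ^ 2) * φ (y - Real.sqrt t • v)) * E3

/-- for smooth compactly supported `φ`,
`∫ H(x,ξ,t) φ(ξ) dξ → φ(x)` as `t → 0⁺`. -/
theorem ouKernel_dirac_limit
    (d : ℕ) (hd : 1 ≤ d) (α δ : ℂ) (hα : 0 < α.re)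
    (S : Matrix (Fin d) (Fin d) ℝ) (hS : S.transpose = -S)
    (φ : EuclideanSpace ℝ (Fin d) → ℂ)
    (hφ : ContDiff ℝ (⊤ : ℕ∞) φ) (hφc : HasCompactSupport φ)
    (x : EuclideanSpace ℝ (Fin d)) :
    Filter.Tendsto (fun t : ℝ => ∫ ξ : EuclideanSpace ℝ (Fin d), ouH d α δ S x ξ t * φ ξ)
      (nhdsWithin 0 (Set.Ioi 0)) (nhds (φ x)) := by
  have hRot := ouRot_tendsto d S x
  have hαne : α ≠ 0 := fun h => by simp [h] at hα
  have h4πα : (4 * (Real.pi : ℂ) * α) ≠ 0 :=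
    mul_ne_zero (mul_ne_zero (by norm_num) (by exact_mod_cast Real.pi_ne_zero)) hαne
  set C : ℂ := (4 * (Real.pi : ℂ) * α) ^ (-(d : ℂ) / 2) with hC
  have hb : 0 < ((4 * α)⁻¹).re := by
    rw [Complex.inv_re]
    apply div_pos
    · simpa using by positivity
    · exact Complex.normSq_pos.mpr (mul_ne_zero (by norm_num) hαne)
  have hInt : Integrable (fun v : EuclideanSpace ℝ (Fin d) =>
      Complex.exp (-(4 * α)⁻¹ * (‖v‖ : ℂ) ^ 2)) := by
    simpa using
      GaussianFourier.integrable_cexp_neg_mul_sq_norm_add hb 0 (0 : EuclideanSpace ℝ (Fin d))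
  have hGauss : ∫ v : EuclideanSpace ℝ (Fin d), Complex.exp (-(4 * α)⁻¹ * (‖v‖ : ℂ) ^ 2)
      = (4 * (Real.pi : ℂ) * α) ^ ((d : ℂ) / 2) := by
    rw [GaussianFourier.integral_cexp_neg_mul_sq_norm hb]
    congr 1
    · rw [div_eq_mul_inv, inv_inv]; ring
    · norm_num [finrank_euclideanSpace_fin]
  obtain ⟨M, hM⟩ := hφ.continuous.bounded_above_of_compact_support hφc
  have hmove : ∀ v : EuclideanSpace ℝ (Fin d),
      Filter.Tendsto (fun t : ℝ => ouRot d S t x - Real.sqrt t • v)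
        (nhdsWithin 0 (Set.Ioi 0)) (nhds x) := by
    intro v
    have h2 : Filter.Tendsto (fun t : ℝ => Real.sqrt t • v) (nhds 0) (nhds ((0:ℝ) • v)) := by
      have := (Continuous.tendsto (f := fun t : ℝ => Real.sqrt t • v)
        (Real.continuous_sqrt.smul continuous_const) 0)
      rwa [Real.sqrt_zero] at this
    have h3 := hRot.sub h2
    rw [zero_smul, sub_zero] at h3
    exact h3.mono_left nhdsWithin_le_nhds
  have hI : Filter.Tendsto (fun t : ℝ => ∫ v : EuclideanSpace ℝ (Fin d),
      Complex.exp (-(4 * α)⁻¹ * (‖v‖ : ℂ) ^ 2) * φ (ouRot d S t x - Real.sqrt t • v))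
      (nhdsWithin 0 (Set.Ioi 0))
      (nhds ((4 * (Real.pi : ℂ) * α) ^ ((d : ℂ) / 2) * φ x)) := by
    have hlim := MeasureTheory.tendsto_integral_filter_of_dominated_convergence
      (μ := (volume : Measure (EuclideanSpace ℝ (Fin d))))
      (l := nhdsWithin (0:ℝ) (Set.Ioi 0))
      (F := fun t v => Complex.exp (-(4 * α)⁻¹ * (‖v‖ : ℂ) ^ 2)
        * φ (ouRot d S t x - Real.sqrt t • v))
      (f := fun v => Complex.exp (-(4 * α)⁻¹ * (‖v‖ : ℂ) ^ 2) * φ x)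
      (bound := fun v => ‖Complex.exp (-(4 * α)⁻¹ * (‖v‖ : ℂ) ^ 2)‖ * M)
      (Filter.Eventually.of_forall fun t => by
        apply Continuous.aestronglyMeasurable
        exact (Complex.continuous_exp.comp (continuous_const.mul
          ((Complex.continuous_ofReal.comp continuous_norm).pow 2))).mul
          (hφ.continuous.comp (continuous_const.sub (continuous_id.const_smul (Real.sqrt t)))))
      (Filter.Eventually.of_forall fun t => Filter.Eventually.of_forall fun v => by
        rw [norm_mul]
        exact mul_le_mul_of_nonneg_left (hM _) (norm_nonneg _))
      (hInt.norm.mul_const M)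
      (Filter.Eventually.of_forall fun v =>
        Filter.Tendsto.const_mul _ ((hφ.continuous.tendsto x).comp (hmove v)))
    rwa [MeasureTheory.integral_mul_const, hGauss] at hlim
  have h1 : Filter.Tendsto (fun t : ℝ => Complex.exp (-(δ * t)))
      (nhdsWithin 0 (Set.Ioi 0)) (nhds 1) := by
    have : Continuous fun t : ℝ => Complex.exp (-(δ * t)) :=
      Complex.continuous_exp.comp (continuous_const.mul Complex.continuous_ofReal).neg
    have h := (this.tendsto 0).mono_left (nhdsWithin_le_nhds (s := Set.Ioi (0:ℝ)))
    simpa using h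
  have hfinal := (h1.mul_const C).mul hI
  have hval : (1 : ℂ) * C * ((4 * (Real.pi : ℂ) * α) ^ ((d : ℂ) / 2) * φ x) = φ x := by
    have hne : (4 * (Real.pi : ℂ) * α) ^ ((d : ℂ) / 2) ≠ 0 := by
      simp [Complex.cpow_eq_zero_iff, h4πα]
    rw [one_mul, ← mul_assoc, hC, neg_div, Complex.cpow_neg, inv_mul_cancel₀ hne, one_mul]
  rw [hval] at hfinal
  apply hfinal.congr'
  filter_upwards [self_mem_nhdsWithin] with t ht
  exact (ouH_integral_eq d α δ hα S φ x ht).symm
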